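/- Let N ≥ 2, let w₁,…,w_N > 0 with Σᵢ wᵢ = 1, and let x₁ < x₂ < ⋯ < x_N be real numbers. Then Σᵢ₌₁^N Σ_{j≠i} wᵢ wⱼ log|xᵢ − xⱼ| ≥ Σᵢ₌₁^N wᵢ log₋ rᵢ, where rᵢ = min(Δxᵢ, Δxᵢ₊₁) with Δxᵢ = xᵢ − xᵢ₋₁ and the convention Δx₁ = Δx_{N+1} = +∞ (so r₁ = Δx₂ and r_N = Δx_N). -/
import Mathlib


open Real Finset

/-- `rᵢ = min(Δxᵢ, Δxᵢ₊₁)` with the convention `Δx₁ = Δx_{N+1} = +∞`, for `N = n + 2`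
particles indexed from `0` to `n+1`. -/
noncomputable def rball (n : ℕ) (x : Fin (n + 2) → ℝ) (i : Fin (n + 2)) : ℝ :=
  if i.val = 0 then x 1 - x 0
  else if i.val = n + 1 then x i - x (i - 1)
  else min (x i - x (i - 1)) (x (i + 1) - x i)

/-- `log₋ t = log t` if `0 < t < 1` and `0` if `t ≥ 1`, i.e. `min (log t) 0` for `t > 0`. -/
noncomputable def logMinus (t : ℝ) : ℝ := min (Real.log t) 0

lemma fin_sub_one_val {n : ℕ} (i : Fin (n + 2)) (h : i.val ≠ 0) :
    ((i - 1 : Fin (n + 2))).val = i.val - 1 := by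
  rw [Fin.coe_sub_one]
  simp [Fin.ext_iff, h]

lemma fin_add_one_val {n : ℕ} (i : Fin (n + 2)) (h : i.val ≠ n + 1) :
    ((i + 1 : Fin (n + 2))).val = i.val + 1 := by
  rw [Fin.val_add_one]
  have : i ≠ Fin.last (n+1) := by simp [Fin.ext_iff, h]
  simp [this]

lemma rball_pos (n : ℕ) (x : Fin (n + 2) → ℝ) (hx : StrictMono x) (i : Fin (n + 2)) :
    0 < rball n x i := by
  unfold rball
  split_ifs with h0 h1
  · exact sub_pos.2 (hx (by simp [Fin.lt_def]))
  · exact sub_pos.2 (hx (by rw [Fin.lt_def, fin_sub_one_val i h0]; omega))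
  · refine lt_min (sub_pos.2 (hx ?_)) (sub_pos.2 (hx ?_))
    · rw [Fin.lt_def, fin_sub_one_val i h0]; omega
    · rw [Fin.lt_def, fin_add_one_val i h1]; omega

lemma rball_le (n : ℕ) (x : Fin (n + 2) → ℝ) (hx : StrictMono x)
    (i j : Fin (n + 2)) (hij : j ≠ i) : rball n x i ≤ |x i - x j| := by
  have hvne : j.val ≠ i.val := fun h => hij (Fin.ext h)
  unfold rball
  split_ifs with h0 h1
  · have h1j : x 1 ≤ x j := hx.monotone (by rw [Fin.le_def]; simp [Fin.val_one]; omega)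
    have hij' : x i ≤ x j := hx.monotone (by rw [Fin.le_def]; omega)
    rw [abs_sub_comm, abs_of_nonneg (by linarith)]
    have : x i = x 0 := by congr 1; exact Fin.ext h0
    linarith
  · have hjv : j.val ≤ i.val - 1 := by omega
    have hji : x j ≤ x (i - 1) := hx.monotone (by rw [Fin.le_def, fin_sub_one_val i (by omega)]; omega)
    rw [abs_of_nonneg (by linarith [hx.monotone (show j ≤ i by rw [Fin.le_def]; omega)])]
    linarith
  · rcases lt_or_gt_of_ne hvne with h | h
    · have hji : x j ≤ x (i - 1) := hx.monotone (by rw [Fin.le_def, fin_sub_one_val i h0]; omega)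
      rw [abs_of_nonneg (by linarith [hx.monotone (show j ≤ i by rw [Fin.le_def]; omega)])]
      exact le_trans (min_le_left _ _) (by linarith)
    · have hji : x (i + 1) ≤ x j := hx.monotone (by rw [Fin.le_def, fin_add_one_val i h1]; omega)
      rw [abs_sub_comm, abs_of_nonneg (by linarith [hx.monotone (show i ≤ j by rw [Fin.le_def]; omega)])]
      exact le_trans (min_le_right _ _) (by linarith)

/-- for `N ≥ 2`, positive weights summing to one, and a strictly increasing
configuration `x₁ < ⋯ < x_N`,
`Σᵢ Σ_{j≠i} wᵢwⱼ log|xᵢ − xⱼ| ≥ Σᵢ wᵢ log₋ rᵢ`. -/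
theorem interaction_log_bound (n : ℕ) (w : Fin (n + 2) → ℝ)
    (hw : ∀ i, 0 < w i) (hw1 : ∑ i, w i = 1)
    (x : Fin (n + 2) → ℝ) (hx : StrictMono x) :
    ∑ i, w i * logMinus (rball n x i) ≤
      ∑ i, ∑ j ∈ Finset.univ.erase i, w i * w j * Real.log |x i - x j| := by
  apply Finset.sum_le_sum
  intro i _
  have hr : 0 < rball n x i := rball_pos n x hx i
  have hLnonpos : logMinus (rball n x i) ≤ 0 := min_le_right _ _
  have key : ∀ j ∈ Finset.univ.erase i,
      w i * w j * logMinus (rball n x i) ≤ w i * w j * Real.log |x i - x j| := by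
    intro j hj
    have hjne : j ≠ i := Finset.ne_of_mem_erase hj
    have hle : rball n x i ≤ |x i - x j| := rball_le n x hx i j hjne
    have : logMinus (rball n x i) ≤ Real.log |x i - x j| :=
      le_trans (min_le_left _ _) (Real.log_le_log hr hle)
    exact mul_le_mul_of_nonneg_left this (mul_nonneg (hw i).le (hw j).le)
  have hsum : ∑ j ∈ Finset.univ.erase i, w i * w j * logMinus (rball n x i)
      ≤ ∑ j ∈ Finset.univ.erase i, w i * w j * Real.log |x i - x j| :=
    Finset.sum_le_sum key
  have hws : ∑ j ∈ Finset.univ.erase i, w j = 1 - w i := by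
    rw [Finset.sum_erase_eq_sub (Finset.mem_univ i), hw1]
  have heq : ∑ j ∈ Finset.univ.erase i, w i * w j * logMinus (rball n x i)
      = w i * (1 - w i) * logMinus (rball n x i) := by
    rw [← Finset.sum_mul, ← Finset.mul_sum, hws]
  refine le_trans ?_ hsum
  rw [heq]
  have hwi := hw i
  nlinarith [mul_nonneg (mul_self_nonneg (w i)) (neg_nonneg.mpr hLnonpos)]
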